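/- Let Φ ∈ ℝ^{np×n} be (n-stacked) q-error detectable, let x ∈ ℝⁿ, e ∈ Σ_qⁿ, and v ∈ ℝ^{np} with ‖v_i‖₂ ≤ v_max for every block i ∈ {1,…,p}, and let ẑ = Φx + v + e, x̂ = Φ†ẑ, r = ẑ − Φx̂. If ‖r_i‖₂ ≤ √p · v_max for all i ∈ {1,…,p}, then ‖e_i‖₂ ≤ κ^e_{p,q}(Φ) · v_max for all i ∈ {1,…,p}, and moreover ‖x̂ − x‖₂ ≤ κ^d_{p,q}(Φ) · v_max, where κ^d_{p,q}(Φ) := (√p + 1)√(p−q)/ρ_{p,q}(Φ) and κ^e_{p,q}(Φ) := (η_{p,q}(Φ)√(p−q) + 1)(√p + 1). -/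

import Mathlib

open scoped Classical
open Finset Matrix

noncomputable section

namespace SecureEst

variable {n p : ℕ}

/-- The `i`-th `n`-block of an `n`-stacked vector. -/
def blk (z : Fin p × Fin n → ℝ) (i : Fin p) : Fin n → ℝ := fun j => z (i, j)

/-- The `n`-stacked support of a stacked vector. -/
def blockSupp (z : Fin p × Fin n → ℝ) : Finset (Fin p) :=
  Finset.univ.filter fun i => blk z i ≠ 0

/-- The `n`-stacked ℓ⁰ "norm": number of nonzero blocks. -/
def l0n (z : Fin p × Fin n → ℝ) : ℕ := (blockSupp z).card

/-- `n`-stacked `q`-sparsity: membership in `Σ_qⁿ`. -/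
def Sparse (q : ℕ) (z : Fin p × Fin n → ℝ) : Prop := l0n z ≤ q

/-- Euclidean (ℓ²) norm of a real vector. -/
def enorm2 {m : Type*} [Fintype m] (x : m → ℝ) : ℝ := Real.sqrt (∑ i, x i ^ 2)

/-- `Φ_{Λⁿ}`: zero out the row-blocks of `Φ` outside `Λ`. -/
def zeroB (Λ : Finset (Fin p)) (Φ : Matrix (Fin p × Fin n) (Fin n) ℝ) :
    Matrix (Fin p × Fin n) (Fin n) ℝ :=
  fun ij k => if ij.1 ∈ Λ then Φ ij k else 0

/-- `z_{Λⁿ}`: zero out the blocks of a stacked vector outside `Λ`. -/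
def zeroV (Λ : Finset (Fin p)) (z : Fin p × Fin n → ℝ) : Fin p × Fin n → ℝ :=
  fun ij => if ij.1 ∈ Λ then z ij else 0

/-- `Φ_{Γᵢⁿ}`: the `i`-th row-block of `Φ`. -/
def rowBlk (Φ : Matrix (Fin p × Fin n) (Fin n) ℝ) (i : Fin p) :
    Matrix (Fin n) (Fin n) ℝ := fun j k => Φ (i, j) k

/-- Moore–Penrose pseudoinverse (full-column-rank formula `(MᵀM)⁻¹Mᵀ`). -/
def pinv {m k : Type*} [Fintype m] [Fintype k] [DecidableEq k]
    (M : Matrix m k ℝ) : Matrix k m ℝ := (Mᵀ * M)⁻¹ * Mᵀ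

/-- Spectral norm (largest singular value) of a real matrix. -/
def specNorm {m k : Type*} [Fintype m] [Fintype k] (M : Matrix m k ℝ) : ℝ :=
  sSup {r | ∃ x : k → ℝ, enorm2 x = 1 ∧ r = enorm2 (M.mulVec x)}

/-- Minimum singular value of a (tall) real matrix. -/
def sigmaMin {m k : Type*} [Fintype m] [Fintype k] (M : Matrix m k ℝ) : ℝ :=
  sInf {r | ∃ x : k → ℝ, enorm2 x = 1 ∧ r = enorm2 (M.mulVec x)}

/-- `(n-stacked) q`-error detectability. -/
def ErrDetectable (Φ : Matrix (Fin p × Fin n) (Fin n) ℝ) (q : ℕ) : Prop :=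
  ∀ x x' : Fin n → ℝ, ∀ e : Fin p × Fin n → ℝ,
    Sparse q e → Φ.mulVec x + e = Φ.mulVec x' → x = x'

/-- `(n-stacked) q`-error correctability. -/
def ErrCorrectable (Φ : Matrix (Fin p × Fin n) (Fin n) ℝ) (q : ℕ) : Prop :=
  ∀ x₁ x₂ : Fin n → ℝ, ∀ e₁ e₂ : Fin p × Fin n → ℝ,
    Sparse q e₁ → Sparse q e₂ →
      Φ.mulVec x₁ + e₁ = Φ.mulVec x₂ + e₂ → x₁ = x₂

/-- `(n-stacked)` cospark. -/
def cosparkN (Φ : Matrix (Fin p × Fin n) (Fin n) ℝ) : ℕ :=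
  sInf {m : ℕ | ∃ x : Fin n → ℝ, x ≠ 0 ∧ m = l0n (Φ.mulVec x)}

/-- `ρ_{p,q}(Φ)`. -/
def rho (Φ : Matrix (Fin p × Fin n) (Fin n) ℝ) (q : ℕ) : ℝ :=
  sInf {r | ∃ Λ : Finset (Fin p), Λ.card = p - q ∧ r = sigmaMin (zeroB Λ Φ)}

/-- `η_{p,q}(Φ)`. -/
def eta (Φ : Matrix (Fin p × Fin n) (Fin n) ℝ) (q : ℕ) : ℝ :=
  sSup {r | ∃ Λ : Finset (Fin p), Λ.card = p - q ∧
    ∃ i : Fin p, i ∉ Λ ∧ r = specNorm (rowBlk Φ i * pinv (zeroB Λ Φ))}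

/-- `κ^d_{p,q}(Φ)`. -/
def kappaD (Φ : Matrix (Fin p × Fin n) (Fin n) ℝ) (q : ℕ) : ℝ :=
  (Real.sqrt (p : ℝ) + 1) * Real.sqrt ((p - q : ℕ) : ℝ) / rho Φ q

/-- `κ^e_{p,q}(Φ)`. -/
def kappaE (Φ : Matrix (Fin p × Fin n) (Fin n) ℝ) (q : ℕ) : ℝ :=
  (eta Φ q * Real.sqrt ((p - q : ℕ) : ℝ) + 1) * (Real.sqrt (p : ℝ) + 1)

/-- The finite candidate set `F_{p,r}(ẑ)`. -/
def Fset (Φ : Matrix (Fin p × Fin n) (Fin n) ℝ) (r : ℕ) (z : Fin p × Fin n → ℝ) :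
    Set (Fin n → ℝ) :=
  {χ | ∃ Λ : Finset (Fin p), Λ.card = p - r ∧
    χ = (pinv (zeroB Λ Φ)).mulVec (zeroV Λ z)}

/-- `η'_{p,q,r}(Φ)`. -/
def eta' (Φ : Matrix (Fin p × Fin n) (Fin n) ℝ) (q r : ℕ) : ℝ :=
  sSup {a | ∃ Λ : Finset (Fin p), Λ.card = p - q ∧
    a = sInf {b | ∃ Λ' : Finset (Fin p), Λ' ⊆ Λ ∧ Λ'.card = p - r ∧
      b = sSup {c | ∃ i ∈ Λ \ Λ',
        c = specNorm (rowBlk Φ i * pinv (zeroB Λ' Φ))}}}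

/-- `ϑ_{p,q,r}(Φ)`. -/
def theta (Φ : Matrix (Fin p × Fin n) (Fin n) ℝ) (q r : ℕ) : ℝ :=
  max (eta' Φ q r * Real.sqrt ((p - r : ℕ) : ℝ) + 1) (Real.sqrt ((p - r : ℕ) : ℝ))

/-- `κ^c_{p,q,r}(Φ)`. -/
def kappaC (Φ : Matrix (Fin p × Fin n) (Fin n) ℝ) (q r : ℕ) : ℝ :=
  (theta Φ q r + 1) * Real.sqrt ((p - 2 * q : ℕ) : ℝ) / rho Φ (2 * q)

/-- `κ^{c'}_{p,q,r}(Φ)`. -/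
def kappaC' (Φ : Matrix (Fin p × Fin n) (Fin n) ℝ) (q r : ℕ) : ℝ :=
  (theta Φ q r - 1) / sSup {c | ∃ i : Fin p, c = specNorm (rowBlk Φ i)}

/-- Stacked observability matrix `G` with row-blocks `Gᵢ = [cᵢᵀ (cᵢA)ᵀ ⋯ (cᵢAⁿ⁻¹)ᵀ]ᵀ`. -/
def obsG (A : Matrix (Fin n) (Fin n) ℝ) (C : Matrix (Fin p) (Fin n) ℝ) :
    Matrix (Fin p × Fin n) (Fin n) ℝ :=
  fun ij k => (C * A ^ (ij.2 : ℕ)) ij.1 k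

/-- `C_Λ`: zero out the rows of `C` outside `Λ`. -/
def zeroRows (Λ : Finset (Fin p)) (C : Matrix (Fin p) (Fin n) ℝ) :
    Matrix (Fin p) (Fin n) ℝ :=
  fun i k => if i ∈ Λ then C i k else 0

/-- Observability of the pair `(A, C)`: the observability matrix has full column rank. -/
def Observable (A : Matrix (Fin n) (Fin n) ℝ) (C : Matrix (Fin p) (Fin n) ℝ) : Prop :=
  (obsG A C).rank = n

/-- `q`-redundant observability. -/
def RedObservable (A : Matrix (Fin n) (Fin n) ℝ) (C : Matrix (Fin p) (Fin n) ℝ)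
    (q : ℕ) : Prop :=
  ∀ Λ : Finset (Fin p), p - q ≤ Λ.card → Observable A (zeroRows Λ C)

/-- Euclidean norm of a complex vector. -/
def enormC {m : Type*} [Fintype m] (v : m → ℂ) : ℝ :=
  Real.sqrt (∑ i, ‖v i‖ ^ 2)

/-- The set `V(A)` of normalized complex eigenvectors of a real matrix `A`. -/
def eigSet (A : Matrix (Fin n) (Fin n) ℝ) : Set (Fin n → ℂ) :=
  {v | (∃ μ : ℂ, (A.map Complex.ofReal).mulVec v = μ • v) ∧ enormC v = 1}

/-- ℓ⁰ norm of a complex vector. -/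
def l0C (y : Fin p → ℂ) : ℕ := (Finset.univ.filter fun i => y i ≠ 0).card

/-- `n`-stacked ℓ⁰ norm of a complex stacked vector. -/
def l0nC (z : Fin p × Fin n → ℂ) : ℕ :=
  (Finset.univ.filter fun i => (fun j => z (i, j)) ≠ (0 : Fin n → ℂ)).card

/-- The dynamic security index `α_d(A, C)`. -/
def alphaD (A : Matrix (Fin n) (Fin n) ℝ) (C : Matrix (Fin p) (Fin n) ℝ) : ℕ :=
  sInf {m : ℕ | ∃ v ∈ eigSet A, m = l0C ((C.map Complex.ofReal).mulVec v)}

end SecureEst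

/-! On the at least `p − q` blocks that the attack leaves untouched, `Φ (x̂ − x) = v − r`,
so these blocks are at most `(√p + 1) v_max` in size. By detectability any `p − q` blocks
of `Φ` form an injective matrix `Φ_{Λⁿ}`: its smallest singular value bounds `x̂ − x`
through `ρ`, and its pseudoinverse recovers `x̂ − x` from those blocks, so the remaining
blocks of `Φ (x̂ − x)`, and with them `e = r − v + Φ (x̂ − x)`, are bounded through `η`. -/

namespace SecureEst

section EuclideanNorm

variable {m : Type*} [Fintype m]

lemma enorm2_eq_norm (x : m → ℝ) : enorm2 x = ‖WithLp.toLp 2 x‖ := by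
  simp [enorm2, EuclideanSpace.norm_eq, sq_abs]

lemma enorm2_nonneg (x : m → ℝ) : 0 ≤ enorm2 x := Real.sqrt_nonneg _

lemma enorm2_eq_zero {x : m → ℝ} : enorm2 x = 0 ↔ x = 0 := by
  rw [enorm2_eq_norm, norm_eq_zero, WithLp.toLp_eq_zero]

lemma enorm2_pos {x : m → ℝ} (hx : x ≠ 0) : 0 < enorm2 x :=
  (enorm2_nonneg x).lt_of_ne' (enorm2_eq_zero.not.mpr hx)

@[simp]
lemma enorm2_zero : enorm2 (0 : m → ℝ) = 0 := enorm2_eq_zero.mpr rfl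

lemma enorm2_sq (x : m → ℝ) : enorm2 x ^ 2 = ∑ i, x i ^ 2 :=
  Real.sq_sqrt (Finset.sum_nonneg fun _ _ => sq_nonneg _)

lemma enorm2_sub_le (x y : m → ℝ) : enorm2 (x - y) ≤ enorm2 x + enorm2 y := by
  simpa only [enorm2_eq_norm, WithLp.toLp_sub] using norm_sub_le (WithLp.toLp 2 x) _

lemma enorm2_add_le (x y : m → ℝ) : enorm2 (x + y) ≤ enorm2 x + enorm2 y := by
  simpa only [enorm2_eq_norm, WithLp.toLp_add] using norm_add_le (WithLp.toLp 2 x) _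

lemma enorm2_smul (c : ℝ) (x : m → ℝ) : enorm2 (c • x) = |c| * enorm2 x := by
  simpa only [enorm2_eq_norm, WithLp.toLp_smul, Real.norm_eq_abs] using
    norm_smul c (WithLp.toLp 2 x)

end EuclideanNorm

section SingularValues

variable {m k : Type*} [Fintype m] [Fintype k]

lemma div_enorm2_mem_unitImage (M : Matrix m k ℝ) {x : k → ℝ} (hx : x ≠ 0) :
    enorm2 (M *ᵥ x) / enorm2 x ∈ {r | ∃ y : k → ℝ, enorm2 y = 1 ∧ r = enorm2 (M *ᵥ y)} := by
  have hx' : enorm2 x ≠ 0 := (enorm2_pos hx).ne'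
  have hpos : 0 < (enorm2 x)⁻¹ := inv_pos.mpr (enorm2_pos hx)
  refine ⟨(enorm2 x)⁻¹ • x, ?_, ?_⟩
  · rw [enorm2_smul, abs_of_pos hpos, inv_mul_cancel₀ hx']
  · rw [mulVec_smul, enorm2_smul, abs_of_pos hpos, inv_mul_eq_div]

attribute [local instance] Matrix.instL2OpNormedAddCommGroup in
lemma bddAbove_unitImage (M : Matrix m k ℝ) :
    BddAbove {r | ∃ y : k → ℝ, enorm2 y = 1 ∧ r = enorm2 (M *ᵥ y)} := by
  refine ⟨‖M‖, ?_⟩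
  rintro _ ⟨y, hy, rfl⟩
  rw [enorm2_eq_norm] at hy ⊢
  simpa [hy] using M.l2_opNorm_mulVec (WithLp.toLp 2 y)

lemma specNorm_nonneg (M : Matrix m k ℝ) : 0 ≤ specNorm M :=
  Real.sSup_nonneg (by rintro _ ⟨x, -, rfl⟩; exact enorm2_nonneg _)

lemma sigmaMin_nonneg (M : Matrix m k ℝ) : 0 ≤ sigmaMin M :=
  Real.sInf_nonneg (by rintro _ ⟨x, -, rfl⟩; exact enorm2_nonneg _)

lemma enorm2_mulVec_le_specNorm_mul (M : Matrix m k ℝ) (x : k → ℝ) :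
    enorm2 (M *ᵥ x) ≤ specNorm M * enorm2 x := by
  rcases eq_or_ne x 0 with rfl | hx
  · simp [enorm2]
  · rw [← div_le_iff₀ (enorm2_pos hx)]
    exact le_csSup (bddAbove_unitImage M) (div_enorm2_mem_unitImage M hx)

lemma sigmaMin_mul_enorm2_le (M : Matrix m k ℝ) (x : k → ℝ) :
    sigmaMin M * enorm2 x ≤ enorm2 (M *ᵥ x) := by
  rcases eq_or_ne x 0 with rfl | hx
  · simp [enorm2]
  · rw [← le_div_iff₀ (enorm2_pos hx)]
    exact csInf_le ⟨0, by rintro _ ⟨y, -, rfl⟩; exact enorm2_nonneg _⟩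
      (div_enorm2_mem_unitImage M hx)

/-- A left inverse `L` bounds `M` from below on the unit sphere by `1 / specNorm L`. -/
lemma sigmaMin_pos_of_mul_eq_one [Nonempty k] [DecidableEq k] {M : Matrix m k ℝ}
    {L : Matrix k m ℝ} (hLM : L * M = 1) : 0 < sigmaMin M := by
  have hsphere : ∀ y : k → ℝ, enorm2 y = 1 → 1 ≤ specNorm L * enorm2 (M *ᵥ y) := by
    intro y hy
    simpa [hy, mulVec_mulVec, hLM] using enorm2_mulVec_le_specNorm_mul L (M *ᵥ y)
  obtain ⟨y₀, hy₀⟩ : ∃ y : k → ℝ, enorm2 y = 1 :=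
    ⟨Pi.single (Classical.arbitrary k) 1, by simp [enorm2, Pi.single_apply]⟩
  have hL : 0 < specNorm L := by
    by_contra! h
    have := hsphere y₀ hy₀
    nlinarith [enorm2_nonneg (M *ᵥ y₀), specNorm_nonneg L]
  refine (inv_pos.mpr hL).trans_le (le_csInf ⟨_, y₀, hy₀, rfl⟩ ?_)
  rintro _ ⟨y, hy, rfl⟩
  rw [inv_le_iff_one_le_mul₀' hL]
  exact hsphere y hy

lemma pinv_mul_self [DecidableEq k] {M : Matrix m k ℝ} (hM : Function.Injective M.mulVec) :
    pinv M * M = 1 := by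
  have hMtM : Function.Injective (Mᵀ * M).mulVec := LinearMap.ker_eq_bot.mp <|
    (ker_mulVecLin_transpose_mul_self M).trans (LinearMap.ker_eq_bot.mpr hM)
  rw [pinv, Matrix.mul_assoc, nonsing_inv_mul]
  exact (isUnit_iff_isUnit_det _).mp (mulVec_injective_iff_isUnit.mp hMtM)

end SingularValues

section Blocks

variable {n p : ℕ}

lemma blk_mulVec (Φ : Matrix (Fin p × Fin n) (Fin n) ℝ) (x : Fin n → ℝ) (i : Fin p) :
    blk (Φ *ᵥ x) i = rowBlk Φ i *ᵥ x := rfl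

lemma blk_zeroV (Λ : Finset (Fin p)) (z : Fin p × Fin n → ℝ) (i : Fin p) :
    blk (zeroV Λ z) i = if i ∈ Λ then blk z i else 0 := by
  by_cases hi : i ∈ Λ <;> ext j <;> simp [blk, zeroV, hi]

lemma zeroB_mulVec (Λ : Finset (Fin p)) (Φ : Matrix (Fin p × Fin n) (Fin n) ℝ)
    (x : Fin n → ℝ) : zeroB Λ Φ *ᵥ x = zeroV Λ (Φ *ᵥ x) := by
  ext ⟨i, j⟩
  by_cases hi : i ∈ Λ <;> simp [zeroB, zeroV, mulVec, dotProduct, hi]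

lemma enorm2_sq_eq_sum_blk (z : Fin p × Fin n → ℝ) :
    enorm2 z ^ 2 = ∑ i, enorm2 (blk z i) ^ 2 := by
  simp only [enorm2_sq, Fintype.sum_prod_type, blk]

lemma enorm2_zeroV_le (Λ : Finset (Fin p)) (z : Fin p × Fin n → ℝ) {B : ℝ}
    (hB : ∀ i ∈ Λ, enorm2 (blk z i) ≤ B) : enorm2 (zeroV Λ z) ≤ √(Λ.card : ℝ) * B := by
  rcases Λ.eq_empty_or_nonempty with rfl | ⟨i₀, hi₀⟩
  · simp [zeroV, enorm2]
  have hB0 : 0 ≤ B := (enorm2_nonneg _).trans (hB i₀ hi₀)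
  have hsq : enorm2 (zeroV Λ z) ^ 2 ≤ Λ.card * B ^ 2 := by
    rw [enorm2_sq_eq_sum_blk]
    simp_rw [blk_zeroV, apply_ite enorm2, enorm2_zero, ite_pow, zero_pow two_ne_zero,
      sum_ite_mem, univ_inter]
    simpa using sum_le_sum fun i hi => pow_le_pow_left₀ (enorm2_nonneg _) (hB i hi) 2
  calc enorm2 (zeroV Λ z) = √(enorm2 (zeroV Λ z) ^ 2) := (Real.sqrt_sq (enorm2_nonneg _)).symm
    _ ≤ √(Λ.card * B ^ 2) := Real.sqrt_le_sqrt hsq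
    _ = √(Λ.card : ℝ) * B := by rw [Real.sqrt_mul (Nat.cast_nonneg _), Real.sqrt_sq hB0]

lemma sparse_of_zeroV_eq_zero {q : ℕ} {Λ : Finset (Fin p)} (hΛ : p - q ≤ Λ.card)
    {z : Fin p × Fin n → ℝ} (hz : zeroV Λ z = 0) : Sparse q z := by
  have hsupp : blockSupp z ⊆ Λᶜ := by
    intro i hi
    rw [mem_compl]
    intro hiΛ
    have hblk := congrArg (blk · i) hz
    simp only [blk_zeroV, if_pos hiΛ] at hblk
    exact (mem_filter.mp hi).2 hblk
  calc l0n z ≤ Λᶜ.card := card_le_card hsupp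
    _ = p - Λ.card := by rw [card_compl, Fintype.card_fin]
    _ ≤ q := by omega

variable {Φ : Matrix (Fin p × Fin n) (Fin n) ℝ} {q : ℕ}

lemma zeroB_mulVec_injective (hdet : ErrDetectable Φ q) {Λ : Finset (Fin p)}
    (hΛ : p - q ≤ Λ.card) : Function.Injective (zeroB Λ Φ).mulVec := by
  intro a b hab
  have hzero : zeroV Λ (Φ *ᵥ (b - a)) = 0 := by rw [← zeroB_mulVec, mulVec_sub, hab, sub_self]
  exact hdet a b _ (sparse_of_zeroV_eq_zero hΛ hzero) (by rw [mulVec_sub, add_sub_cancel])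

lemma rho_nonneg : 0 ≤ rho Φ q :=
  Real.sInf_nonneg (by rintro _ ⟨_, -, rfl⟩; exact sigmaMin_nonneg _)

lemma rho_le_sigmaMin {Λ : Finset (Fin p)} (hΛ : Λ.card = p - q) :
    rho Φ q ≤ sigmaMin (zeroB Λ Φ) :=
  csInf_le ⟨0, by rintro _ ⟨_, -, rfl⟩; exact sigmaMin_nonneg _⟩ ⟨Λ, hΛ, rfl⟩

lemma rho_pos [Nonempty (Fin n)] (hdet : ErrDetectable Φ q) : 0 < rho Φ q := by
  set S := {r | ∃ Λ : Finset (Fin p), Λ.card = p - q ∧ r = sigmaMin (zeroB Λ Φ)}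
  have hfin : S.Finite :=
    (Set.finite_range fun Λ : Finset (Fin p) => sigmaMin (zeroB Λ Φ)).subset
      (by rintro _ ⟨Λ, -, rfl⟩; exact ⟨Λ, rfl⟩)
  obtain ⟨Λ, -, hΛ⟩ :=
    exists_subset_card_eq (s := (univ : Finset (Fin p))) (n := p - q) (by simp)
  have hne : S.Nonempty := ⟨_, Λ, hΛ, rfl⟩
  obtain ⟨Λ', hΛ', hmin⟩ := hne.csInf_mem hfin
  rw [rho, hmin]
  exact sigmaMin_pos_of_mul_eq_one (pinv_mul_self (zeroB_mulVec_injective hdet hΛ'.ge))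

lemma eta_nonneg : 0 ≤ eta Φ q :=
  Real.sSup_nonneg (by rintro _ ⟨_, -, _, -, rfl⟩; exact specNorm_nonneg _)

lemma specNorm_le_eta {Λ : Finset (Fin p)} (hΛ : Λ.card = p - q) {i : Fin p} (hi : i ∉ Λ) :
    specNorm (rowBlk Φ i * pinv (zeroB Λ Φ)) ≤ eta Φ q := by
  refine le_csSup (Set.Finite.bddAbove ?_) ⟨Λ, hΛ, i, hi, rfl⟩
  refine (Set.finite_range fun y : Finset (Fin p) × Fin p =>
    specNorm (rowBlk Φ y.2 * pinv (zeroB y.1 Φ))).subset ?_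
  rintro _ ⟨Λ, -, i, -, rfl⟩
  exact ⟨(Λ, i), rfl⟩

lemma kappaE_nonneg : 0 ≤ kappaE Φ q := by
  have := eta_nonneg (Φ := Φ) (q := q)
  unfold kappaE
  positivity

end Blocks

section Estimates

variable {n p : ℕ} {Φ : Matrix (Fin p × Fin n) (Fin n) ℝ} {q : ℕ} {Λ : Finset (Fin p)}
  {d : Fin n → ℝ} {B : ℝ}

lemma enorm2_zeroB_mulVec_le (hΛ : Λ.card = p - q)
    (hB : ∀ i ∈ Λ, enorm2 (blk (Φ *ᵥ d) i) ≤ B) :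
    enorm2 (zeroB Λ Φ *ᵥ d) ≤ √((p - q : ℕ) : ℝ) * B := by
  rw [zeroB_mulVec, ← hΛ]
  exact enorm2_zeroV_le Λ _ hB

lemma enorm2_le_of_blk_mulVec_le (hdet : ErrDetectable Φ q) (hΛ : Λ.card = p - q)
    (hB : ∀ i ∈ Λ, enorm2 (blk (Φ *ᵥ d) i) ≤ B) :
    enorm2 d ≤ √((p - q : ℕ) : ℝ) * B / rho Φ q := by
  have hw := enorm2_zeroB_mulVec_le hΛ hB
  rcases isEmpty_or_nonempty (Fin n) with hn | hn
  · rw [Subsingleton.elim d 0, enorm2_zero]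
    exact div_nonneg ((enorm2_nonneg _).trans hw) rho_nonneg
  rw [le_div_iff₀ (rho_pos hdet)]
  calc enorm2 d * rho Φ q ≤ sigmaMin (zeroB Λ Φ) * enorm2 d := by
        rw [mul_comm]; exact mul_le_mul_of_nonneg_right (rho_le_sigmaMin hΛ) (enorm2_nonneg d)
    _ ≤ enorm2 (zeroB Λ Φ *ᵥ d) := sigmaMin_mul_enorm2_le _ _
    _ ≤ √((p - q : ℕ) : ℝ) * B := hw

lemma enorm2_rowBlk_mulVec_le (hdet : ErrDetectable Φ q) (hΛ : Λ.card = p - q)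
    (hB : ∀ i ∈ Λ, enorm2 (blk (Φ *ᵥ d) i) ≤ B) {i : Fin p} (hi : i ∉ Λ) :
    enorm2 (rowBlk Φ i *ᵥ d) ≤ eta Φ q * (√((p - q : ℕ) : ℝ) * B) := by
  have hd : d = pinv (zeroB Λ Φ) *ᵥ (zeroB Λ Φ *ᵥ d) := by
    rw [mulVec_mulVec, pinv_mul_self (zeroB_mulVec_injective hdet hΛ.ge), one_mulVec]
  rw [hd, mulVec_mulVec]
  calc _ ≤ specNorm (rowBlk Φ i * pinv (zeroB Λ Φ)) * enorm2 (zeroB Λ Φ *ᵥ d) :=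
        enorm2_mulVec_le_specNorm_mul _ _
    _ ≤ eta Φ q * (√((p - q : ℕ) : ℝ) * B) :=
        mul_le_mul (specNorm_le_eta hΛ hi) (enorm2_zeroB_mulVec_le hΛ hB) (enorm2_nonneg _)
          eta_nonneg

end Estimates

end SecureEst

open SecureEst in
theorem residual_detection_noisy_bound_general {n p : ℕ}
    (Φ : Matrix (Fin p × Fin n) (Fin n) ℝ) (q : ℕ)
    (hdet : ErrDetectable Φ q)
    (x : Fin n → ℝ) (e v : Fin p × Fin n → ℝ) (vmax : ℝ)
    (he : Sparse q e) (hv : ∀ i : Fin p, enorm2 (blk v i) ≤ vmax)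
    (zhat : Fin p × Fin n → ℝ) (xhat : Fin n → ℝ) (r : Fin p × Fin n → ℝ)
    (hz : zhat = Φ.mulVec x + v + e)
    (hr : r = zhat - Φ.mulVec xhat)
    (hres : ∀ i : Fin p, enorm2 (blk r i) ≤ Real.sqrt (p : ℝ) * vmax) :
    (∀ i : Fin p, enorm2 (blk e i) ≤ kappaE Φ q * vmax) ∧
      enorm2 (xhat - x) ≤ kappaD Φ q * vmax := by
  obtain ⟨Λ, hΛe, hΛ⟩ : ∃ Λ ⊆ (blockSupp e)ᶜ, Λ.card = p - q :=
    exists_subset_card_eq (by rw [card_compl, Fintype.card_fin]; exact Nat.sub_le_sub_left he p)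
  have he0 : ∀ i ∈ Λ, blk e i = 0 := fun i hi => by simpa [blockSupp] using hΛe hi
  have hΦd : ∀ i, rowBlk Φ i *ᵥ (xhat - x) = blk e i + blk v i - blk r i := by
    intro i
    rw [← blk_mulVec, show Φ *ᵥ (xhat - x) = e + v - r by rw [mulVec_sub, hr, hz]; abel]
    rfl
  have hB : ∀ i ∈ Λ, enorm2 (blk (Φ *ᵥ (xhat - x)) i) ≤ (√p + 1) * vmax := by
    intro i hi
    rw [blk_mulVec, hΦd, he0 i hi, zero_add]
    linarith [enorm2_sub_le (blk v i) (blk r i), hv i, hres i]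
  refine ⟨fun i => ?_, ?_⟩
  · by_cases hi : i ∈ Λ
    · rw [he0 i hi, enorm2_zero]
      exact mul_nonneg kappaE_nonneg ((enorm2_nonneg _).trans (hv i))
    have hei : blk e i = blk r i - blk v i + rowBlk Φ i *ᵥ (xhat - x) := by rw [hΦd]; abel
    calc enorm2 (blk e i) ≤ enorm2 (blk r i - blk v i) + enorm2 (rowBlk Φ i *ᵥ (xhat - x)) :=
          hei ▸ enorm2_add_le _ _
      _ ≤ (√p * vmax + vmax) + eta Φ q * (√((p - q : ℕ) : ℝ) * ((√p + 1) * vmax)) :=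
          add_le_add ((enorm2_sub_le _ _).trans (add_le_add (hres i) (hv i)))
            (enorm2_rowBlk_mulVec_le hdet hΛ hB hi)
      _ = kappaE Φ q * vmax := by rw [kappaE]; ring
  · calc enorm2 (xhat - x) ≤ √((p - q : ℕ) : ℝ) * ((√p + 1) * vmax) / rho Φ q :=
          enorm2_le_of_blk_mulVec_le hdet hΛ hB
      _ = kappaD Φ q * vmax := by rw [kappaD]; ring

open SecureEst in
/-- Theorem 1.(ii): with `zhat = Φx + v + e`, `xhat = Φ†zhat`, `r = zhat − Φxhat`,
if every residual block satisfies `‖rᵢ‖₂ ≤ √p · v_max`, then every error block satisfies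
`‖eᵢ‖₂ ≤ κ^e_{p,q}(Φ) v_max`, and `‖xhat − x‖₂ ≤ κ^d_{p,q}(Φ) v_max`. -/
theorem residual_detection_noisy_bound {n p : ℕ}
    (Φ : Matrix (Fin p × Fin n) (Fin n) ℝ) (q : ℕ)
    (hdet : ErrDetectable Φ q)
    (x : Fin n → ℝ) (e v : Fin p × Fin n → ℝ) (vmax : ℝ)
    (he : Sparse q e) (hv : ∀ i : Fin p, enorm2 (blk v i) ≤ vmax)
    (zhat : Fin p × Fin n → ℝ) (xhat : Fin n → ℝ) (r : Fin p × Fin n → ℝ)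
    (hz : zhat = Φ.mulVec x + v + e)
    (hxhat : xhat = (pinv Φ).mulVec zhat)
    (hr : r = zhat - Φ.mulVec xhat)
    (hres : ∀ i : Fin p, enorm2 (blk r i) ≤ Real.sqrt (p : ℝ) * vmax) :
    (∀ i : Fin p, enorm2 (blk e i) ≤ kappaE Φ q * vmax) ∧
      enorm2 (xhat - x) ≤ kappaD Φ q * vmax :=
  residual_detection_noisy_bound_general Φ q hdet x e v vmax he hv zhat xhat r hz hr hres
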